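/- Define F : (0,1) → ℝ by F(t) := ∫_0^{√(−ln t)} √(e^{−2x²} − t²) dx. Then F is continuous and strictly decreasing on (0,1), lim_{t→1⁻} F(t) = 0, and lim_{t→0⁺} F(t) = √π / 2. -/
import Mathlib

open MeasureTheory intervalIntegral

/-- The WKB quantization integral for the Gaussian potential `A₀(x) = e^{−x²}`:
`F(t) = ∫_0^{√(−ln t)} √(e^{−2x²} − t²) dx`. -/
noncomputable def F (t : ℝ) : ℝ :=
  ∫ x in (0 : ℝ)..(Real.sqrt (-Real.log t)), Real.sqrt (Real.exp (-2 * x ^ 2) - t ^ 2)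

noncomputable def G (t : ℝ) : ℝ :=
  ∫ x in Set.Ioi (0 : ℝ), Real.sqrt (Real.exp (-2 * x ^ 2) - t ^ 2)

lemma sqrt_le_exp (t x : ℝ) :
    Real.sqrt (Real.exp (-2 * x ^ 2) - t ^ 2) ≤ Real.exp (-1 * x ^ 2) := by
  have h : Real.exp (-2 * x ^ 2) = (Real.exp (-1 * x ^ 2)) ^ 2 := by
    rw [← Real.exp_nat_mul]; ring_nf
  calc Real.sqrt (Real.exp (-2 * x ^ 2) - t ^ 2)
      ≤ Real.sqrt (Real.exp (-2 * x ^ 2)) := by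
        apply Real.sqrt_le_sqrt; nlinarith [sq_nonneg t]
    _ = Real.exp (-1 * x ^ 2) := by rw [h, Real.sqrt_sq (Real.exp_pos _).le]

lemma integrable_f (t : ℝ) :
    IntegrableOn (fun x => Real.sqrt (Real.exp (-2 * x ^ 2) - t ^ 2)) (Set.Ioi 0) := by
  apply Integrable.mono (g := fun x => Real.exp (-1 * x ^ 2))
    ((integrable_exp_neg_mul_sq one_pos).restrict)
  · exact (Continuous.aestronglyMeasurable (by fun_prop)).restrict
  · filter_upwards with x
    rw [Real.norm_eq_abs, Real.norm_eq_abs, abs_of_nonneg (Real.sqrt_nonneg _),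
      abs_of_nonneg (Real.exp_pos _).le]
    exact sqrt_le_exp t x

lemma G_continuous : Continuous G := by
  apply continuous_of_dominated (bound := fun x => Real.exp (-1 * x ^ 2))
  · intro t; exact (Continuous.aestronglyMeasurable (by fun_prop)).restrict
  · intro t; filter_upwards with x
    rw [Real.norm_eq_abs, abs_of_nonneg (Real.sqrt_nonneg _)]
    exact sqrt_le_exp t x
  · exact (integrable_exp_neg_mul_sq one_pos).restrict
  · filter_upwards with x; fun_prop

lemma F_eq_G {t : ℝ} (ht : 0 < t) (ht1 : t ≤ 1) : F t = G t := by
  have hlog : 0 ≤ -Real.log t := by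
    simpa using Real.log_nonpos ht.le ht1
  set a := Real.sqrt (-Real.log t) with ha
  have ha0 : 0 ≤ a := Real.sqrt_nonneg _
  have hzero : ∀ x ∈ Set.Ioi (0:ℝ) \ Set.Ioc 0 a,
      Real.sqrt (Real.exp (-2 * x ^ 2) - t ^ 2) = 0 := by
    rintro x ⟨hx0, hx⟩
    simp only [Set.mem_Ioc, Set.mem_Ioi] at hx0 hx
    have hxa : a < x := by
      by_contra h; exact hx ⟨hx0, not_lt.mp h⟩
    have hx2 : -Real.log t < x ^ 2 := by
      have := Real.sq_sqrt hlog
      nlinarith [Real.sqrt_nonneg (-Real.log t)]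
    have : Real.exp (-2 * x ^ 2) - t ^ 2 ≤ 0 := by
      have h1 : Real.exp (-2 * x ^ 2) < Real.exp (2 * Real.log t) := by
        apply Real.exp_lt_exp.mpr; nlinarith
      have h2 : Real.exp (2 * Real.log t) = t ^ 2 := by
        rw [two_mul, Real.exp_add, Real.exp_log ht]; ring
      nlinarith
    exact Real.sqrt_eq_zero_of_nonpos this
  rw [F, intervalIntegral.integral_of_le ha0, G,
    ← setIntegral_eq_of_subset_of_forall_diff_eq_zero measurableSet_Ioi
      Set.Ioc_subset_Ioi_self hzero]

lemma f_mono {s t x : ℝ} (h0 : 0 ≤ s) (hst : s ≤ t) :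
    Real.sqrt (Real.exp (-2 * x ^ 2) - t ^ 2) ≤
      Real.sqrt (Real.exp (-2 * x ^ 2) - s ^ 2) := by
  apply Real.sqrt_le_sqrt
  nlinarith

lemma G_strictAnti : ∀ s ∈ Set.Ioo (0:ℝ) 1, ∀ t ∈ Set.Ioo (0:ℝ) 1, s < t → G t < G s := by
  intro s hs t ht hst
  obtain ⟨hs0, hs1⟩ := hs; obtain ⟨ht0, ht1⟩ := ht
  have hsub : 0 < ∫ x in Set.Ioi (0:ℝ),
      (Real.sqrt (Real.exp (-2 * x ^ 2) - s ^ 2)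
        - Real.sqrt (Real.exp (-2 * x ^ 2) - t ^ 2)) := by
    have hint : IntegrableOn (fun x => Real.sqrt (Real.exp (-2 * x ^ 2) - s ^ 2)
        - Real.sqrt (Real.exp (-2 * x ^ 2) - t ^ 2)) (Set.Ioi 0) :=
      (integrable_f s).sub (integrable_f t)
    rw [setIntegral_pos_iff_support_of_nonneg_ae ?_ hint]
    · -- support has positive measure: contains Ioo 0 (sqrt (-log t))
      have hlog : 0 < -Real.log t := by
        simpa using Real.log_neg ht0 ht1
      have ha : 0 < Real.sqrt (-Real.log t) := Real.sqrt_pos.mpr hlog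
      apply lt_of_lt_of_le (b := volume (Set.Ioo (0:ℝ) (Real.sqrt (-Real.log t))))
      · simpa [Real.volume_Ioo] using ha
      · apply measure_mono
        intro x hx
        obtain ⟨hx0, hxa⟩ := hx
        constructor
        · -- in support: difference nonzero
          have hx2 : x ^ 2 < -Real.log t := by
            have := Real.sq_sqrt hlog.le
            nlinarith
          have hpos : 0 < Real.exp (-2 * x ^ 2) - t ^ 2 := by
            have h1 : Real.exp (2 * Real.log t) < Real.exp (-2 * x ^ 2) := by
              apply Real.exp_lt_exp.mpr; nlinarith
            have h2 : Real.exp (2 * Real.log t) = t ^ 2 := by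
              rw [two_mul, Real.exp_add, Real.exp_log ht0]; ring
            nlinarith
          have hlt : Real.sqrt (Real.exp (-2 * x ^ 2) - t ^ 2)
              < Real.sqrt (Real.exp (-2 * x ^ 2) - s ^ 2) := by
            apply Real.sqrt_lt_sqrt hpos.le
            nlinarith
          simp only [Function.mem_support]
          intro h; nlinarith
        · exact hx0
    · filter_upwards with x
      have := f_mono (x := x) hs0.le hst.le
      simp only [Pi.zero_apply]; linarith
  have := integral_sub (integrable_f s) (integrable_f t)
  rw [this] at hsub
  unfold G; linarith

lemma G_one : G 1 = 0 := by
  unfold G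
  rw [setIntegral_congr_fun measurableSet_Ioi (g := fun _ => (0:ℝ))]
  · simp
  · intro x hx
    apply Real.sqrt_eq_zero_of_nonpos
    have : Real.exp (-2 * x ^ 2) ≤ 1 := by
      rw [← Real.exp_zero]; apply Real.exp_le_exp.mpr
      nlinarith [sq_nonneg x]
    nlinarith

lemma G_zero : G 0 = Real.sqrt Real.pi / 2 := by
  unfold G
  rw [setIntegral_congr_fun measurableSet_Ioi (g := fun x => Real.exp (-1 * x ^ 2))]
  · rw [integral_gaussian_Ioi]; norm_num
  · intro x hx
    have h : Real.exp (-2 * x ^ 2) = (Real.exp (-1 * x ^ 2)) ^ 2 := by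
      rw [← Real.exp_nat_mul]; ring_nf
    simp only [ne_eq, OfNat.ofNat_ne_zero, not_false_eq_true, zero_pow, sub_zero]
    rw [h, Real.sqrt_sq (Real.exp_pos _).le]

/-- `F` is continuous and strictly decreasing on `(0,1)`, with `F(t) → 0` as `t → 1⁻`
and `F(t) → √π/2` as `t → 0⁺`. -/
theorem F_continuous_strictAnti_limits :
    ContinuousOn F (Set.Ioo (0 : ℝ) 1) ∧
    StrictAntiOn F (Set.Ioo (0 : ℝ) 1) ∧
    Filter.Tendsto F (nhdsWithin 1 (Set.Ioo (0 : ℝ) 1)) (nhds 0) ∧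
    Filter.Tendsto F (nhdsWithin 0 (Set.Ioo (0 : ℝ) 1)) (nhds (Real.sqrt Real.pi / 2)) := by
  have hFG : Set.EqOn F G (Set.Ioo (0:ℝ) 1) := fun t ht => F_eq_G ht.1 ht.2.le
  refine ⟨?_, ?_, ?_, ?_⟩
  · exact (G_continuous.continuousOn).congr hFG
  · intro s hs t ht hst
    rw [hFG hs, hFG ht]
    exact G_strictAnti s hs t ht hst
  · have h1 : Filter.Tendsto G (nhdsWithin 1 (Set.Ioo (0:ℝ) 1)) (nhds (G 1)) :=
      (G_continuous.continuousAt).continuousWithinAt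
    rw [G_one] at h1
    exact Filter.Tendsto.congr' (Filter.eventuallyEq_of_mem self_mem_nhdsWithin
      (fun t ht => (hFG ht).symm)) h1
  · have h1 : Filter.Tendsto G (nhdsWithin 0 (Set.Ioo (0:ℝ) 1)) (nhds (G 0)) :=
      (G_continuous.continuousAt).continuousWithinAt
    rw [G_zero] at h1
    exact Filter.Tendsto.congr' (Filter.eventuallyEq_of_mem self_mem_nhdsWithin
      (fun t ht => (hFG ht).symm)) h1
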